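/- arXiv:2304.09509 — 2 statements merged into one kernel-verified Lean document; each statement's English description precedes it below -/
import Mathlib

section
/- Let F : ℝⁿ × P(ℝⁿ) → ℝ be bounded, continuous in x for each μ and weakly continuous in μ for each x; set c(μ) := inf_{z∈ℝⁿ} F(z,μ) and C_F := sup_{z,μ} (F(z,μ) − c(μ)). Let 𝒜 ⊆ ℝⁿ be nonempty and closed with F(a,μ) = c(μ) for every a ∈ 𝒜 and μ ∈ P(ℝⁿ). Let T > 0, let m : [0,T] → P(ℝⁿ) be narrowly continuous, fix x ∈ ℝⁿ, and let y* : [0,T] → ℝⁿ be a minimizer of ∫_0^T ( |ẏ(s)|²/2 + F(y(s), m(s)) ) ds among locally Lipschitz curves y with y(0) = x. For δ > 0 set 𝒜_δ := {z ∈ ℝⁿ : there exists μ ∈ P(ℝⁿ) with F(z,μ) − c(μ) < δ}. Then the Lebesgue measure of {s ∈ [0,T] : y*(s) ∉ 𝒜_δ} is at most (1/2 + C_F)·dist(x,𝒜)/δ. -/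
/-!
Compare `y*` with the curve that runs at unit speed from `x` to a nearest point `a ∈ 𝒜`, reached
at time `d = dist(x, 𝒜)`, and then rests at `a`. Up to time `d` its Lagrangian exceeds `c(m(s))`
by at most `1/2 + C_F`, afterwards by nothing since `F(a, ·) = c`, whereas the Lagrangian of `y*`
exceeds `c(m(s))` by at least `δ` whenever `y*(s) ∉ 𝒜_δ`. Minimality of `y*` then gives
`δ · |{s : y*(s) ∉ 𝒜_δ}| ≤ (1/2 + C_F) · d`.
-/

open MeasureTheory Set Filter Metric

noncomputable section

abbrev En (n : ℕ) : Type := EuclideanSpace ℝ (Fin n)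
abbrev Pn (n : ℕ) : Type := MeasureTheory.ProbabilityMeasure (En n)

/-- Action functional on the time interval `[t,T]`. -/
def action {n : ℕ} (F : En n → Pn n → ℝ) (m : ℝ → Pn n) (t T : ℝ) (y : ℝ → En n) : ℝ :=
  ∫ s in t..T, (‖deriv y s‖ ^ 2 / 2 + F (y s) (m s))

/-- Admissible curves on `[t,T]` starting at `x`. -/
def Adm {n : ℕ} (t T : ℝ) (x : En n) (y : ℝ → En n) : Prop :=
  (∃ L : NNReal, LipschitzOnWith L y (Set.Icc t T)) ∧ y t = x

/-- `cmin F μ` is the infimum of `F (·, μ)`. -/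
def cmin {n : ℕ} (F : En n → Pn n → ℝ) (μ : Pn n) : ℝ := ⨅ z : En n, F z μ

open Topology TopologicalSpace

/-- `ProbabilityMeasure` carries the Giry σ-algebra rather than the Borel one, so no σ-algebra on
`P` enters the statement and the proof works with the Borel σ-algebras. -/
theorem aemeasurable_comp_of_separatelyContinuous {α X P : Type*} [TopologicalSpace α]
    [MeasurableSpace α] [OpensMeasurableSpace α] {μ : Measure α} [TopologicalSpace X]
    [MetrizableSpace X] [SecondCountableTopology X] [TopologicalSpace P] {F : X → P → ℝ}
    (hFx : ∀ p, Continuous fun x => F x p) (hFp : ∀ x, Continuous (F x))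
    {s : Set α} (hs : MeasurableSet s) {y : α → X} (hy : ContinuousOn y s) {m : α → P}
    (hm : ContinuousOn m s) :
    AEMeasurable (fun t => F (y t) (m t)) (μ.restrict s) := by
  borelize X P
  have hF : Measurable (Function.uncurry F) :=
    measurable_uncurry_of_continuous_of_measurable hFx fun x => (hFp x).measurable
  exact hF.comp_aemeasurable ((hy.aemeasurable hs).prodMk (hm.aemeasurable hs))

section StoppedSegment

variable {E : Type*} [NormedAddCommGroup E] [NormedSpace ℝ E]

/-- Unit speed from `x` to `a`, then at rest at `a` (constant when `x = a`, as `0 / 0 = 0`). -/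
def stoppedSegment (x a : E) (s : ℝ) : E :=
  x + (min s (dist x a) / dist x a) • (a - x)

theorem stoppedSegment_zero (x a : E) : stoppedSegment x a 0 = x := by
  simp [stoppedSegment]

theorem stoppedSegment_of_dist_le {x a : E} {s : ℝ} (hs : dist x a ≤ s) :
    stoppedSegment x a s = a := by
  rcases eq_or_ne x a with rfl | hxa
  · simp [stoppedSegment]
  · rw [stoppedSegment, min_eq_right hs, div_self (dist_ne_zero.2 hxa), one_smul,
      add_sub_cancel]

theorem lipschitzWith_stoppedSegment (x a : E) : LipschitzWith 1 (stoppedSegment x a) := by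
  refine LipschitzWith.of_dist_le_mul fun s t => ?_
  rcases eq_or_ne x a with rfl | hxa
  · simp [stoppedSegment]
  have hd : 0 < dist x a := dist_pos.2 hxa
  rw [dist_eq_norm, stoppedSegment, stoppedSegment, add_sub_add_left_eq_sub, ← sub_smul,
    ← sub_div, norm_smul, ← dist_eq_norm_sub', Real.norm_eq_abs, abs_div, abs_of_pos hd,
    div_mul_cancel₀ _ hd.ne', NNReal.coe_one, one_mul, Real.dist_eq]
  simpa using abs_min_sub_min_le_max s (dist x a) t (dist x a)

theorem deriv_stoppedSegment_of_dist_lt {x a : E} {s : ℝ} (hs : dist x a < s) :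
    deriv (stoppedSegment x a) s = 0 := by
  have : stoppedSegment x a =ᶠ[𝓝 s] fun _ => a := by
    filter_upwards [Ioi_mem_nhds hs] with t ht using stoppedSegment_of_dist_le ht.le
  rw [this.deriv_eq, deriv_const]

end StoppedSegment

theorem cmin_le {n : ℕ} {F : En n → Pn n → ℝ} {M : ℝ} (hM : ∀ z μ, |F z μ| ≤ M)
    (z : En n) (μ : Pn n) : cmin F μ ≤ F z μ :=
  ciInf_le ⟨-M, by rintro _ ⟨w, rfl⟩; exact (abs_le.1 (hM w μ)).1⟩ z

theorem isOpen_setOf_exists_sub_cmin_lt {n : ℕ} {F : En n → Pn n → ℝ}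
    (hFx : ∀ μ, Continuous fun z => F z μ) (δ : ℝ) :
    IsOpen {z : En n | ∃ μ : Pn n, F z μ - cmin F μ < δ} := by
  simp only [ofPred_exists]
  exact isOpen_iUnion fun μ => isOpen_lt ((hFx μ).sub continuous_const) continuous_const

def lagrangian {n : ℕ} (F : En n → Pn n → ℝ) (m : ℝ → Pn n) (y : ℝ → En n) (s : ℝ) : ℝ :=
  ‖deriv y s‖ ^ 2 / 2 + F (y s) (m s)

theorem action_eq_setIntegral_Icc {n : ℕ} (F : En n → Pn n → ℝ) (m : ℝ → Pn n)
    (y : ℝ → En n) {T : ℝ} (hT : 0 ≤ T) :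
    action F m 0 T y = ∫ s in Icc 0 T, lagrangian F m y s := by
  rw [action, intervalIntegral.integral_of_le hT, integral_Icc_eq_integral_Ioc]
  rfl

theorem integrableOn_lagrangian {n : ℕ} {F : En n → Pn n → ℝ} {M : ℝ}
    (hM : ∀ z μ, |F z μ| ≤ M) (hFx : ∀ μ, Continuous fun z => F z μ)
    (hFm : ∀ z, Continuous (F z)) {m : ℝ → Pn n} {a b : ℝ} (hm : ContinuousOn m (Icc a b))
    {y : ℝ → En n} {L : NNReal} (hy : LipschitzOnWith L y (Icc a b)) :
    IntegrableOn (lagrangian F m y) (Icc a b) := by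
  rw [integrableOn_Icc_iff_integrableOn_Ioo]
  have hmeas : AEStronglyMeasurable (lagrangian F m y) (volume.restrict (Ioo a b)) :=
    (((measurable_deriv y).norm.pow_const 2).div_const 2).aemeasurable.add
      (aemeasurable_comp_of_separatelyContinuous hFx hFm measurableSet_Ioo
        (hy.continuousOn.mono Ioo_subset_Icc_self) (hm.mono Ioo_subset_Icc_self))
      |>.aestronglyMeasurable
  refine IntegrableOn.of_bound measure_Ioo_lt_top hmeas (L ^ 2 / 2 + M) ?_
  filter_upwards [ae_restrict_mem measurableSet_Ioo] with s hs
  have hderiv : ‖deriv y s‖ ≤ L := norm_deriv_le_of_lipschitzOn (Icc_mem_nhds hs.1 hs.2) hy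
  have hF := abs_le.1 (hM (y s) (m s))
  rw [lagrangian, Real.norm_eq_abs, abs_le]
  constructor <;> nlinarith [norm_nonneg (deriv y s)]

section Comparison

variable {n : ℕ} {F : En n → Pn n → ℝ} {C_F δ : ℝ} {m : ℝ → Pn n} {x a : En n}
  {y : ℝ → En n} {B : Set ℝ}

theorem lagrangian_stoppedSegment_sub_le (hcmin : ∀ z μ, cmin F μ ≤ F z μ)
    (hCF : ∀ z μ, F z μ - cmin F μ ≤ C_F) (ha : ∀ μ, F a μ = cmin F μ)
    (hB : ∀ s ∈ B, δ ≤ F (y s) (m s) - cmin F (m s)) (s : ℝ) :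
    lagrangian F m (stoppedSegment x a) s - lagrangian F m y s ≤
      (Iic (dist x a)).indicator (fun _ => 1 / 2 + C_F) s - B.indicator (fun _ => δ) s := by
  have hexcess : B.indicator (fun _ => δ) s ≤ F (y s) (m s) - cmin F (m s) := by
    by_cases hs : s ∈ B
    · simpa [indicator_of_mem hs] using hB s hs
    · simpa [indicator_of_notMem hs] using hcmin (y s) (m s)
  have hkinetic : 0 ≤ ‖deriv y s‖ ^ 2 / 2 := by positivity
  unfold lagrangian
  rcases le_or_gt s (dist x a) with hs | hs
  · have hspeed : ‖deriv (stoppedSegment x a) s‖ ≤ 1 := by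
      simpa using norm_deriv_le_of_lipschitz (lipschitzWith_stoppedSegment x a)
    have := hCF (stoppedSegment x a s) (m s)
    rw [indicator_of_mem (show s ∈ Iic (dist x a) from hs)]
    nlinarith [norm_nonneg (deriv (stoppedSegment x a) s)]
  · rw [indicator_of_notMem (show s ∉ Iic (dist x a) from not_le.2 hs),
      deriv_stoppedSegment_of_dist_lt hs, stoppedSegment_of_dist_le hs.le, ha]
    simp only [norm_zero]
    linarith

theorem action_stoppedSegment_sub_le {M : ℝ} (hM : ∀ z μ, |F z μ| ≤ M)
    (hFx : ∀ μ, Continuous fun z => F z μ) (hFm : ∀ z, Continuous (F z))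
    (hCF : ∀ z μ, F z μ - cmin F μ ≤ C_F) (hC : 0 ≤ 1 / 2 + C_F) (ha : ∀ μ, F a μ = cmin F μ)
    {T : ℝ} (hT : 0 ≤ T) (hm : ContinuousOn m (Icc 0 T)) {L : NNReal}
    (hy : LipschitzOnWith L y (Icc 0 T)) (hBm : MeasurableSet B) (hBT : B ⊆ Icc 0 T)
    (hB : ∀ s ∈ B, δ ≤ F (y s) (m s) - cmin F (m s)) :
    action F m 0 T (stoppedSegment x a) - action F m 0 T y ≤
      (1 / 2 + C_F) * dist x a - δ * volume.real B := by
  have hsegment := integrableOn_lagrangian hM hFx hFm hm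
    ((lipschitzWith_stoppedSegment x a).lipschitzOnWith (s := Icc 0 T))
  have hcurve := integrableOn_lagrangian hM hFx hFm hm hy
  have hbefore : IntegrableOn ((Iic (dist x a)).indicator fun _ => 1 / 2 + C_F) (Icc 0 T) :=
    (integrableOn_const measure_Icc_lt_top.ne).indicator measurableSet_Iic
  have hexcess : IntegrableOn (B.indicator fun _ => δ) (Icc 0 T) :=
    (integrableOn_const measure_Icc_lt_top.ne).indicator hBm
  rw [action_eq_setIntegral_Icc _ _ _ hT, action_eq_setIntegral_Icc _ _ _ hT,
    ← integral_sub hsegment hcurve]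
  calc
    _ ≤ ∫ s in Icc 0 T, ((Iic (dist x a)).indicator (fun _ => 1 / 2 + C_F) s -
          B.indicator (fun _ => δ) s) :=
      setIntegral_mono (hsegment.sub hcurve) (hbefore.sub hexcess)
        (lagrangian_stoppedSegment_sub_le (cmin_le hM) hCF ha hB)
    _ = (1 / 2 + C_F) * volume.real (Icc 0 T ∩ Iic (dist x a)) - δ * volume.real B := by
      rw [integral_sub hbefore hexcess, setIntegral_indicator measurableSet_Iic,
        setIntegral_indicator hBm, setIntegral_const, setIntegral_const, inter_eq_right.2 hBT,
        smul_eq_mul, smul_eq_mul, mul_comm, mul_comm δ]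
    _ ≤ (1 / 2 + C_F) * dist x a - δ * volume.real B := by
      gcongr
      calc volume.real (Icc 0 T ∩ Iic (dist x a))
          ≤ volume.real (Icc 0 (dist x a)) :=
            measureReal_mono (fun s hs => ⟨hs.1.1, hs.2⟩) measure_Icc_lt_top.ne
        _ = dist x a := by simp [Real.volume_real_Icc, dist_nonneg]

end Comparison

/-- **Occupational measure estimate.** Let `y*` minimize the action on `[0,T]` among admissible
curves from `x`, and for `δ > 0` let `𝒜_δ = {z | ∃ μ, F(z,μ) − c(μ) < δ}`. Then the Lebesgue
measure of `{s ∈ [0,T] : y*(s) ∉ 𝒜_δ}` is at most `(1/2 + C_F)·dist(x,𝒜)/δ`. -/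
theorem occupational_measure_estimate {n : ℕ} (F : En n → Pn n → ℝ)
    (M : ℝ) (hM : ∀ (x : En n) (μ : Pn n), |F x μ| ≤ M)
    (hFx : ∀ μ : Pn n, Continuous fun x => F x μ)
    (hFm : ∀ x : En n, Continuous fun μ : Pn n => F x μ)
    (C_F : ℝ) (hCF : ∀ (z : En n) (μ : Pn n), F z μ - cmin F μ ≤ C_F)
    (𝒜 : Set (En n)) (hA_ne : 𝒜.Nonempty) (hA_closed : IsClosed 𝒜)
    (hA_min : ∀ a ∈ 𝒜, ∀ μ : Pn n, F a μ = cmin F μ)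
    (T : ℝ) (hT : 0 < T)
    (m : ℝ → Pn n) (hm : ContinuousOn m (Set.Icc 0 T))
    (x : En n) (ystar : ℝ → En n)
    (hadm : Adm 0 T x ystar)
    (hmin : ∀ y : ℝ → En n, Adm 0 T x y → action F m 0 T ystar ≤ action F m 0 T y)
    (δ : ℝ) (hδ : 0 < δ) :
    MeasureTheory.volume
        {s : ℝ | s ∈ Set.Icc (0:ℝ) T ∧ ystar s ∉ {z : En n | ∃ μ : Pn n, F z μ - cmin F μ < δ}}
      ≤ ENNReal.ofReal ((1/2 + C_F) * Metric.infDist x 𝒜 / δ) := by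
  obtain ⟨⟨L, hLip⟩, -⟩ := hadm
  obtain ⟨a, haA, hxa⟩ := hA_closed.exists_infDist_eq_dist hA_ne x
  set B := {s : ℝ | s ∈ Set.Icc (0:ℝ) T ∧ ystar s ∉ {z : En n | ∃ μ : Pn n, F z μ - cmin F μ < δ}}
  have hBm : MeasurableSet B := (hLip.continuousOn.preimage_isClosed_of_isClosed isClosed_Icc
    (isOpen_setOf_exists_sub_cmin_lt hFx δ).isClosed_compl).measurableSet
  have hB : ∀ s ∈ B, δ ≤ F (ystar s) (m s) - cmin F (m s) :=
    fun s hs => not_lt.1 fun h => hs.2 ⟨m s, h⟩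
  have hC : 0 ≤ 1 / 2 + C_F := by
    have := hCF a default
    rw [hA_min a haA] at this
    linarith
  have hsegment : Adm 0 T x (stoppedSegment x a) :=
    ⟨⟨1, (lipschitzWith_stoppedSegment x a).lipschitzOnWith⟩, stoppedSegment_zero x a⟩
  have hcompare := action_stoppedSegment_sub_le (x := x) hM hFx hFm hCF hC (hA_min a haA)
    hT.le hm hLip hBm (fun s hs => hs.1) hB
  have hmeasure : δ * volume.real B ≤ (1 / 2 + C_F) * infDist x 𝒜 := by
    rw [hxa]
    linarith [hmin _ hsegment]
  have hfinite : volume B ≠ ⊤ :=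
    ((measure_mono fun s (hs : s ∈ B) => hs.1).trans_lt measure_Icc_lt_top).ne
  rw [← ofReal_measureReal hfinite]
  exact ENNReal.ofReal_le_ofReal ((le_div_iff₀' hδ).2 hmeasure)
end
end

section
/- Under the standing assumptions, suppose additionally that there is c_* ∈ ℝ with inf_{z∈ℝⁿ} F(z,μ) = c_* for every μ ∈ P(ℝⁿ), and set M := sup_{x,μ} |F(x,μ)|. Let u^T be the value function associated with the equilibrium flow m^T. Then for every T > 1, x ∈ ℝⁿ and t ∈ [0,T): |u^T(x,t)/(T−t) − c_*| ≤ √(4M) · dist(x,𝒜)/(T−t); equivalently |u^T(x,t) − (T−t) c_*| ≤ √(4M) · dist(x,𝒜). In particular u^T(x,t)/(T−t) → c_* as T → ∞, locally uniformly in (x,t) ∈ ℝⁿ × [0,T). -/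
open MeasureTheory Set Filter Metric

noncomputable section

/-- Support of a probability measure. -/
def msupp {n : ℕ} (μ : Pn n) : Set (En n) := {x | ∀ U ∈ nhds x, μ.toMeasure U ≠ 0}

/-- A Lagrangian equilibrium of the finite-horizon mean field game. -/
def IsEquilibrium {n : ℕ} (F : En n → Pn n → ℝ) (K₀ : Set (En n)) (m₀ : Pn n) (T : ℝ)
    (m : ℝ → Pn n) (Φ : En n → ℝ → En n) : Prop :=
  ContinuousOn m (Set.Icc 0 T) ∧
  (∀ x ∈ K₀, Adm 0 T x (Φ x) ∧
    ∀ y : ℝ → En n, Adm 0 T x y → action F m 0 T (Φ x) ≤ action F m 0 T y) ∧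
  (∀ s ∈ Set.Icc (0:ℝ) T,
    (m s : Measure (En n)) = Measure.map (fun x => Φ x s) (m₀ : Measure (En n)))


/-- Value function of the optimal control problem with horizon `T` and measure flow `m`. -/
def valueFun {n : ℕ} (F : En n → Pn n → ℝ) (m : ℝ → Pn n) (T : ℝ) (x : En n) (t : ℝ) : ℝ :=
  sInf {c | ∃ y : ℝ → En n, Adm t T x y ∧ c = action F m t T y}

/-!
Along any admissible curve the Lagrangian is at least `F ≥ c_*`, so `u ≥ (T - t) c_*`.
For the upper bound let `a ∈ 𝒜` be a nearest point to `x`, `d = dist x a` and `v = √(4M)`.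
If `v (T - t) ≤ 2d`, staying at `x` costs at most `(T - t) M ≤ (T - t) c_* + v d`, since
`M - c_* ≤ 2M = v² / 2`. Otherwise move to `a` at speed `v` during the time `d / v` and rest
there, where `F = c_*`: the cost is at most `(d / v) (v² / 2 + M) + (T - t - d / v) c_*`, which
is again `≤ (T - t) c_* + v d`.
-/

open scoped NNReal

section Integrability

variable {a b : ℝ}

theorem aestronglyMeasurable_restrict_Icc_of_continuous_separately {X Y : Type*}
    [TopologicalSpace X] [TopologicalSpace Y] {F : X → Y → ℝ}
    (hFx : ∀ μ : Y, Continuous fun x => F x μ) (hFm : ∀ x : X, Continuous fun μ : Y => F x μ)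
    {y : ℝ → X} {m : ℝ → Y} (hab : a ≤ b) (hy : ContinuousOn y (Icc a b))
    (hm : ContinuousOn m (Icc a b)) :
    AEStronglyMeasurable (fun s => F (y s) (m s)) (volume.restrict (Icc a b)) := by
  set p : ℝ → ℝ := fun s => projIcc a b hab s
  have hp : Continuous p := continuous_subtype_val.comp continuous_projIcc
  have hp_mem : ∀ s, p s ∈ Icc a b := fun s => (projIcc a b hab s).2
  have hyp : Continuous (y ∘ p) := hy.comp_continuous hp hp_mem
  have hmp : Continuous (m ∘ p) := hm.comp_continuous hp hp_mem
  -- Clamping to `[a, b]` makes `(r, s) ↦ F (y (p s)) (m (p r))` a Carathéodory function.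
  have hjoint : Measurable (Function.uncurry fun r s => F (y (p s)) (m (p r))) :=
    measurable_uncurry_of_continuous_of_measurable (fun s => (hFm _).comp hmp)
      (fun r => ((hFx _).comp hyp).measurable)
  refine (hjoint.comp (measurable_id.prodMk measurable_id)).aestronglyMeasurable.congr ?_
  filter_upwards [ae_restrict_mem measurableSet_Icc] with s hs
  simp [p, projIcc_of_mem hab hs]

theorem intervalIntegrable_lagrangian {E Y : Type*} [NormedAddCommGroup E] [NormedSpace ℝ E]
    [CompleteSpace E] [TopologicalSpace Y] {F : E → Y → ℝ} {y : ℝ → E} {m : ℝ → Y} {M : ℝ}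
    (hM : ∀ x μ, |F x μ| ≤ M)
    (hFx : ∀ μ : Y, Continuous fun x => F x μ) (hFm : ∀ x : E, Continuous fun μ : Y => F x μ)
    {L : ℝ≥0} (hab : a ≤ b) (hy : LipschitzOnWith L y (Icc a b))
    (hm : ContinuousOn m (Icc a b)) :
    IntervalIntegrable (fun s => ‖deriv y s‖ ^ 2 / 2 + F (y s) (m s)) volume a b := by
  rw [intervalIntegrable_iff_integrableOn_Icc_of_le hab]
  have hmeas : AEStronglyMeasurable (fun s => ‖deriv y s‖ ^ 2 / 2 + F (y s) (m s))
      (volume.restrict (Icc a b)) :=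
    (((continuous_norm.pow 2).div_const 2).comp_aestronglyMeasurable
      (aestronglyMeasurable_deriv y _)).add
      (aestronglyMeasurable_restrict_Icc_of_continuous_separately hFx hFm hab
        hy.continuousOn hm)
  refine IntegrableOn.of_bound measure_Icc_lt_top hmeas ((L : ℝ) ^ 2 / 2 + M) ?_
  rw [← restrict_Ioo_eq_restrict_Icc]
  filter_upwards [ae_restrict_mem measurableSet_Ioo] with s hs
  have hderiv : ‖deriv y s‖ ≤ L :=
    norm_deriv_le_of_lipschitzOn (isOpen_Ioo.mem_nhds hs) (hy.mono Ioo_subset_Icc_self)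
  calc ‖‖deriv y s‖ ^ 2 / 2 + F (y s) (m s)‖ ≤ ‖deriv y s‖ ^ 2 / 2 + |F (y s) (m s)| := by
        rw [Real.norm_eq_abs]
        exact (abs_add_le _ _).trans_eq (by rw [abs_of_nonneg (by positivity)])
    _ ≤ (L : ℝ) ^ 2 / 2 + M := by gcongr; exact hM _ _

end Integrability

section TravelCurve

variable {E : Type*} [NormedAddCommGroup E] [NormedSpace ℝ E] {x w : E} {t b s : ℝ}

def travelCurve (x w : E) (t b : ℝ) (s : ℝ) : E := x + (max t (min b s) - t) • w

theorem travelCurve_left (htb : t ≤ b) : travelCurve x w t b t = x := by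
  simp [travelCurve, htb]

theorem travelCurve_of_le (htb : t ≤ b) (hbs : b ≤ s) :
    travelCurve x w t b s = x + (b - t) • w := by
  simp [travelCurve, min_eq_left hbs, max_eq_right htb]

theorem lipschitzWith_travelCurve : LipschitzWith ‖w‖₊ (travelCurve x w t b) := by
  have hline : LipschitzWith ‖w‖₊ fun r : ℝ => x + (r - t) • w :=
    LipschitzWith.of_dist_le_mul fun r r' => by
      simp [dist_eq_norm, ← sub_smul, norm_smul, mul_comm]
  have hcomp := hline.comp ((LipschitzWith.id.const_min b).const_max t)
  rwa [mul_one] at hcomp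

theorem deriv_travelCurve_of_mem_Ioo (hs : s ∈ Ioo t b) : deriv (travelCurve x w t b) s = w := by
  have hev : travelCurve x w t b =ᶠ[nhds s] fun r => x + (r - t) • w := by
    filter_upwards [isOpen_Ioo.mem_nhds hs] with r hr
    simp [travelCurve, min_eq_right hr.2.le, max_eq_right hr.1.le]
  rw [hev.deriv_eq]
  simpa using (((hasDerivAt_id s).sub_const t).smul_const w).const_add x |>.deriv

theorem deriv_travelCurve_of_lt (htb : t ≤ b) (hbs : b < s) :
    deriv (travelCurve x w t b) s = 0 := by
  have hev : travelCurve x w t b =ᶠ[nhds s] fun _ => x + (b - t) • w := by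
    filter_upwards [isOpen_Ioi.mem_nhds hbs] with r hr using travelCurve_of_le htb hr.le
  rw [hev.deriv_eq, deriv_const]

theorem add_dist_div_smul_eq (x a : E) {v : ℝ} (hv : v ≠ 0) :
    x + (dist x a / v) • ((v / dist x a) • (a - x)) = a := by
  rcases eq_or_ne (dist x a) 0 with hxa | hxa
  · simp [dist_eq_zero.mp hxa]
  · rw [smul_smul, div_mul_div_cancel₀ hv, div_self hxa, one_smul, add_sub_cancel]

theorem norm_div_dist_smul_sub_le (x a : E) {v : ℝ} (hv : 0 ≤ v) :
    ‖(v / dist x a) • (a - x)‖ ≤ v := by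
  rw [norm_smul, norm_sub_rev, ← dist_eq_norm, Real.norm_of_nonneg (by positivity)]
  rcases eq_or_ne (dist x a) 0 with hxa | hxa
  · simp [hxa, hv]
  · rw [div_mul_cancel₀ v hxa]

end TravelCurve

section Action

variable {n : ℕ} {F : En n → Pn n → ℝ} {M : ℝ} {m : ℝ → Pn n} {t T : ℝ} {x : En n}
  {y : ℝ → En n}

theorem action_le_mul
    (hint : IntervalIntegrable (fun s => ‖deriv y s‖ ^ 2 / 2 + F (y s) (m s)) volume t T)
    (htT : t ≤ T) {C : ℝ} (hC : ∀ s ∈ Ioo t T, ‖deriv y s‖ ^ 2 / 2 + F (y s) (m s) ≤ C) :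
    action F m t T y ≤ (T - t) * C := by
  simpa [action, intervalIntegral.integral_const] using
    intervalIntegral.integral_mono_on_of_le_Ioo htT hint intervalIntegrable_const hC

variable (hM : ∀ x μ, |F x μ| ≤ M) (hFx : ∀ μ : Pn n, Continuous fun x => F x μ)
  (hFm : ∀ x : En n, Continuous fun μ : Pn n => F x μ)
include hM hFx hFm

theorem mul_le_action_of_adm (hm : ContinuousOn m (Icc t T)) (htT : t ≤ T) {c : ℝ}
    (hc : ∀ z μ, c ≤ F z μ) (hy : Adm t T x y) : (T - t) * c ≤ action F m t T y := by
  obtain ⟨⟨L, hyL⟩, -⟩ := hy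
  simpa [action, intervalIntegral.integral_const] using
    intervalIntegral.integral_mono_on htT intervalIntegrable_const
      (intervalIntegrable_lagrangian hM hFx hFm htT hyL hm)
      fun s _ => (hc _ _).trans (le_add_of_nonneg_left (by positivity))

theorem action_travelCurve_le {w : En n} {b c : ℝ} (hm : ContinuousOn m (Icc t T))
    (htb : t ≤ b) (hbT : b ≤ T) (hend : ∀ μ, F (x + (b - t) • w) μ ≤ c) :
    action F m t T (travelCurve x w t b) ≤ (b - t) * (‖w‖ ^ 2 / 2 + M) + (T - b) * c := by
  have hint : ∀ {a a'}, t ≤ a → a ≤ a' → a' ≤ T → IntervalIntegrable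
      (fun s => ‖deriv (travelCurve x w t b) s‖ ^ 2 / 2 + F (travelCurve x w t b s) (m s))
      volume a a' := fun hta haa' ha'T =>
    intervalIntegrable_lagrangian hM hFx hFm haa' lipschitzWith_travelCurve.lipschitzOnWith
      (hm.mono (Icc_subset_Icc hta ha'T))
  have htravel : action F m t b (travelCurve x w t b) ≤ (b - t) * (‖w‖ ^ 2 / 2 + M) :=
    action_le_mul (hint le_rfl htb hbT) htb fun s hs => by
      rw [deriv_travelCurve_of_mem_Ioo hs]
      linarith [(abs_le.mp (hM (travelCurve x w t b s) (m s))).2]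
  have hrest : action F m b T (travelCurve x w t b) ≤ (T - b) * c :=
    action_le_mul (hint htb hbT le_rfl) hbT fun s hs => by
      simpa [deriv_travelCurve_of_lt htb hs.1, travelCurve_of_le htb hs.1.le] using hend (m s)
  have hsplit : action F m t T (travelCurve x w t b) =
      action F m t b (travelCurve x w t b) + action F m b T (travelCurve x w t b) :=
    (intervalIntegral.integral_add_adjacent_intervals (hint le_rfl htb hbT)
      (hint htb hbT le_rfl)).symm
  linarith

theorem valueFun_le_action (hm : ContinuousOn m (Icc t T)) (htT : t ≤ T) (hy : Adm t T x y) :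
    valueFun F m T x t ≤ action F m t T y :=
  csInf_le ⟨(T - t) * -M, by
      rintro _ ⟨z, hz, rfl⟩
      exact mul_le_action_of_adm hM hFx hFm hm htT (fun _ _ => neg_le_of_abs_le (hM _ _)) hz⟩
    ⟨y, hy, rfl⟩

theorem mul_le_valueFun (hm : ContinuousOn m (Icc t T)) (htT : t ≤ T) {c : ℝ}
    (hc : ∀ z μ, c ≤ F z μ) : (T - t) * c ≤ valueFun F m T x t :=
  le_csInf ⟨_, fun _ => x, ⟨⟨0, (LipschitzWith.const x).lipschitzOnWith⟩, rfl⟩, rfl⟩ <| by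
    rintro _ ⟨z, hz, rfl⟩
    exact mul_le_action_of_adm hM hFx hFm hm htT hc hz

theorem valueFun_le_of_travel {w : En n} {b c : ℝ} (hm : ContinuousOn m (Icc t T))
    (htb : t ≤ b) (hbT : b ≤ T) (hend : ∀ μ, F (x + (b - t) • w) μ ≤ c) :
    valueFun F m T x t ≤ (b - t) * (‖w‖ ^ 2 / 2 + M) + (T - b) * c :=
  (valueFun_le_action hM hFx hFm hm (htb.trans hbT)
    ⟨⟨_, lipschitzWith_travelCurve.lipschitzOnWith⟩, travelCurve_left htb⟩).trans
    (action_travelCurve_le hM hFx hFm hm htb hbT hend)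

end Action

section Renormalization

variable {n : ℕ} {F : En n → Pn n → ℝ} {M c_star : ℝ} {m : ℝ → Pn n} {t T : ℝ} {x : En n}
  {𝒜 : Set (En n)}
  (hM : ∀ x μ, |F x μ| ≤ M) (hFx : ∀ μ : Pn n, Continuous fun x => F x μ)
  (hFm : ∀ x : En n, Continuous fun μ : Pn n => F x μ) (hc : ∀ μ : Pn n, cmin F μ = c_star)
  (hm : ContinuousOn m (Icc t T)) (htT : t ≤ T)
include hM hFx hFm hc hm htT

theorem mul_cstar_le_valueFun : (T - t) * c_star ≤ valueFun F m T x t :=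
  mul_le_valueFun hM hFx hFm hm htT fun z μ =>
    hc μ ▸ ciInf_le ⟨-M, by rintro _ ⟨w, rfl⟩; exact neg_le_of_abs_le (hM w μ)⟩ z

theorem valueFun_le_mul_cstar_add (hA_ne : 𝒜.Nonempty) (hA_closed : IsClosed 𝒜)
    (hargmin : ∀ μ : Pn n, {z : En n | ∀ w : En n, F z μ ≤ F w μ} = 𝒜) :
    valueFun F m T x t ≤ (T - t) * c_star + Real.sqrt (4 * M) * infDist x 𝒜 := by
  obtain ⟨a, haA, hax⟩ := hA_closed.exists_infDist_eq_dist hA_ne x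
  have ha_min : ∀ μ, F a μ ≤ c_star := fun μ =>
    hc μ ▸ le_ciInf (((hargmin μ).symm ▸ haA : a ∈ {z : En n | ∀ w, F z μ ≤ F w μ}))
  have hM_cstar : -M ≤ c_star := (neg_le_of_abs_le (hM a (m t))).trans (ha_min _)
  set d := infDist x 𝒜
  set v := Real.sqrt (4 * M)
  have hd : 0 ≤ d := infDist_nonneg
  have hv : 0 ≤ v := Real.sqrt_nonneg _
  have hv_sq : v ^ 2 = 4 * M := Real.sq_sqrt (by linarith [abs_nonneg (F a (m t)), hM a (m t)])
  rcases le_or_gt (v * (T - t)) (2 * d) with hnear | hfar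
  · have hstay := valueFun_le_of_travel (x := x) (w := 0) (c := M) hM hFx hFm hm le_rfl htT
      fun μ => (abs_le.mp (hM _ μ)).2
    simp only [sub_self, zero_mul, zero_add] at hstay
    nlinarith
  · have hv_pos : 0 < v := by nlinarith
    have hτv : d / v * v = d := div_mul_cancel₀ d hv_pos.ne'
    have hτ : d / v < T - t := by rw [div_lt_iff₀ hv_pos]; nlinarith
    have hend : x + (t + d / v - t) • ((v / d) • (a - x)) = a := by
      rw [add_sub_cancel_left, hax, add_dist_div_smul_eq x a hv_pos.ne']
    have hw : ‖(v / d) • (a - x)‖ ≤ v := hax ▸ norm_div_dist_smul_sub_le x a hv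
    have hτ0 : 0 ≤ d / v := by positivity
    have htravel := valueFun_le_of_travel hM hFx hFm hm (b := t + d / v)
      (le_add_of_nonneg_right hτ0) (by linarith) fun μ => hend ▸ ha_min μ
    have hw_sq : ‖(v / d) • (a - x)‖ ^ 2 ≤ v ^ 2 := pow_le_pow_left₀ (norm_nonneg _) hw 2
    nlinarith [mul_le_mul_of_nonneg_left hw_sq hτ0]

theorem abs_valueFun_sub_le (hA_ne : 𝒜.Nonempty) (hA_closed : IsClosed 𝒜)
    (hargmin : ∀ μ : Pn n, {z : En n | ∀ w : En n, F z μ ≤ F w μ} = 𝒜) :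
    |valueFun F m T x t - (T - t) * c_star| ≤ Real.sqrt (4 * M) * infDist x 𝒜 := by
  have hlow := mul_cstar_le_valueFun (x := x) hM hFx hFm hc hm htT
  have hup := valueFun_le_mul_cstar_add (x := x) hM hFx hFm hc hm htT hA_ne hA_closed hargmin
  have hnonneg : 0 ≤ Real.sqrt (4 * M) * infDist x 𝒜 :=
    mul_nonneg (Real.sqrt_nonneg _) infDist_nonneg
  rw [abs_le]
  constructor <;> linarith

end Renormalization

theorem renormalized_value_function_convergence_general {n : ℕ} (F : En n → Pn n → ℝ)
    (M : ℝ) (hM : ∀ (x : En n) (μ : Pn n), |F x μ| ≤ M)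
    (hFx : ∀ μ : Pn n, Continuous fun x => F x μ)
    (hFm : ∀ x : En n, Continuous fun μ : Pn n => F x μ)
    (𝒜 : Set (En n)) (hA_ne : 𝒜.Nonempty) (hA_closed : IsClosed 𝒜)
    (hargmin : ∀ μ : Pn n, {z : En n | ∀ w : En n, F z μ ≤ F w μ} = 𝒜)
    (K₀ : Set (En n))
    (m₀ : Pn n)
    (m : ℝ → ℝ → Pn n) (Φ : ℝ → En n → ℝ → En n)
    (heq : ∀ T : ℝ, 1 < T → IsEquilibrium F K₀ m₀ T (m T) (Φ T))
    (c_star : ℝ) (hc : ∀ μ : Pn n, cmin F μ = c_star) :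
    ∀ T : ℝ, 1 < T → ∀ x : En n, ∀ t ∈ Set.Ico (0:ℝ) T,
      |valueFun F (m T) T x t - (T - t) * c_star| ≤
        Real.sqrt (4 * M) * Metric.infDist x 𝒜 ∧
      |valueFun F (m T) T x t / (T - t) - c_star| ≤
        Real.sqrt (4 * M) * Metric.infDist x 𝒜 / (T - t) := by
  intro T hT x t ⟨ht0, htT⟩
  have hm : ContinuousOn (m T) (Icc t T) := (heq T hT).1.mono (Icc_subset_Icc_left ht0)
  have hbound := abs_valueFun_sub_le (x := x) hM hFx hFm hc hm htT.le hA_ne hA_closed hargmin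
  refine ⟨hbound, ?_⟩
  have hTt : 0 < T - t := sub_pos.mpr htT
  rw [show valueFun F (m T) T x t / (T - t) - c_star =
      (valueFun F (m T) T x t - (T - t) * c_star) / (T - t) by field_simp, abs_div,
    abs_of_pos hTt]
  gcongr

/-- **Convergence of the renormalized value functions.** Under the standing assumptions
together with the condition that `inf_z F(z,μ) = c_*` for every `μ`, the value function `u^T`
of the equilibrium satisfies, for all `T > 1`, `x ∈ ℝⁿ` and `t ∈ [0,T)`:
`|u^T(x,t) − (T−t) c_*| ≤ √(4M)·dist(x,𝒜)`, equivalently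
`|u^T(x,t)/(T−t) − c_*| ≤ √(4M)·dist(x,𝒜)/(T−t)`; in particular `u^T(x,t)/(T−t) → c_*` as
`T → ∞`, locally uniformly. -/
theorem renormalized_value_function_convergence {n : ℕ} (F : En n → Pn n → ℝ)
    (M : ℝ) (hM : ∀ (x : En n) (μ : Pn n), |F x μ| ≤ M)
    (hFx : ∀ μ : Pn n, Continuous fun x => F x μ)
    (hFm : ∀ x : En n, Continuous fun μ : Pn n => F x μ)
    (𝒜 : Set (En n)) (hA_ne : 𝒜.Nonempty) (hA_closed : IsClosed 𝒜)
    (hargmin : ∀ μ : Pn n, {z : En n | ∀ w : En n, F z μ ≤ F w μ} = 𝒜)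
    (γ : ℝ → ℝ) (hγ_pos : ∀ r : ℝ, 0 < r → 0 < γ r)
    (hγ : ∀ r : ℝ, 0 < r → ∀ (z : En n) (μ : Pn n),
      r < Metric.infDist z 𝒜 → γ r ≤ F z μ - cmin F μ)
    (K₀ : Set (En n)) (hK₀ : IsCompact K₀)
    (m₀ : Pn n) (hm₀ : msupp m₀ ⊆ K₀)
    (m : ℝ → ℝ → Pn n) (Φ : ℝ → En n → ℝ → En n)
    (heq : ∀ T : ℝ, 1 < T → IsEquilibrium F K₀ m₀ T (m T) (Φ T))
    (χ' : ℝ) (hχ' : 0 < χ')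
    (hLip : ∀ T : ℝ, 1 < T → ∀ x ∈ K₀,
      LipschitzOnWith (Real.toNNReal χ') (Φ T x) (Set.Icc 0 T))
    (c_star : ℝ) (hc : ∀ μ : Pn n, cmin F μ = c_star) :
    ∀ T : ℝ, 1 < T → ∀ x : En n, ∀ t ∈ Set.Ico (0:ℝ) T,
      |valueFun F (m T) T x t - (T - t) * c_star| ≤
        Real.sqrt (4 * M) * Metric.infDist x 𝒜 ∧
      |valueFun F (m T) T x t / (T - t) - c_star| ≤
        Real.sqrt (4 * M) * Metric.infDist x 𝒜 / (T - t) :=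
  renormalized_value_function_convergence_general F M hM hFx hFm 𝒜 hA_ne hA_closed hargmin K₀ m₀ m Φ
    heq c_star hc
end
end
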